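/- Let D be a connected graph, b ∈ V(D), and let β(D,b) be the central bag as defined from the maximal b-canonical clique separations. If K is a clique cutset of the induced subgraph D[β(D,b)], then b ∈ K. -/

import Mathlib

/-! Suppose `b ∉ K`. Every clique avoiding `b` extends to a maximal one, so `β \ K` lies in
the component `B(K)` of `b` in `D \ K`. A walk of `D \ K` from `b` to a vertex of `β` can be
rerouted inside `β \ K`: once it leaves `β` it runs through some `A(K₁)` with `K₁` maximal,
entering and leaving through `C(K₁)`, which is a clique contained in `β`. Hence `D[β] \ K` is
connected and `K` is not a cutset. -/

/-- The component `B(K)` of `D \ K` containing `b`. -/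
def bComp {V : Type*} (G : SimpleGraph V) (b : V) (K : Set V) : Set V :=
  {v : V | ∃ (hv : v ∈ Kᶜ) (hb : b ∈ Kᶜ), (G.induce Kᶜ).Reachable ⟨b, hb⟩ ⟨v, hv⟩}

/-- `C(K) = N(B(K))`. -/
def cSet {V : Type*} (G : SimpleGraph V) (b : V) (K : Set V) : Set V :=
  {v : V | v ∉ bComp G b K ∧ ∃ u ∈ bComp G b K, G.Adj u v}

/-- `A(K) = V(D) \ (B(K) ∪ C(K))`. -/
def aSet {V : Type*} (G : SimpleGraph V) (b : V) (K : Set V) : Set V :=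
  (bComp G b K ∪ cSet G b K)ᶜ

/-- `K` is a clique not containing `b` whose canonical separation has `A(K)` maximal. -/
def IsMaxSep {V : Type*} (G : SimpleGraph V) (b : V) (K : Set V) : Prop :=
  G.IsClique K ∧ b ∉ K ∧
    ∀ K' : Set V, G.IsClique K' → b ∉ K' → ¬ (aSet G b K ⊂ aSet G b K')

/-- The central bag `β(D,b) = ⋂_{K maximal} (B(K) ∪ C(K))`. -/
def betaSet {V : Type*} (G : SimpleGraph V) (b : V) : Set V :=
  {v : V | ∀ K : Set V, IsMaxSep G b K → v ∈ bComp G b K ∪ cSet G b K}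

namespace SimpleGraph

variable {V : Type*} {G : SimpleGraph V}

def outerBoundary (G : SimpleGraph V) (U : Set V) : Set V :=
  {s | s ∉ U ∧ ∃ x ∈ U, G.Adj x s}

lemma reachable_induce_of_isClique {s T : Set V} (hT : G.IsClique T) {y z : s}
    (hy : y.1 ∈ T) (hz : z.1 ∈ T) : (G.induce s).Reachable y z := by
  by_cases hyz : y = z
  · exact hyz ▸ Reachable.refl y
  · exact Adj.reachable (hT hy hz (Subtype.coe_ne_coe.2 hyz))

end SimpleGraph

section CentralBag

open SimpleGraph

variable {V : Type*} {G : SimpleGraph V} {b : V} {K K₁ U : Set V}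

lemma self_mem_bComp (hb : b ∉ K) : b ∈ bComp G b K :=
  ⟨hb, hb, Reachable.refl _⟩

lemma cSet_subset : cSet G b K ⊆ K := by
  rintro v ⟨hvB, u, ⟨hu, hb, huv⟩, hadj⟩
  by_contra hv
  exact hvB ⟨hv, hb, huv.trans (Adj.reachable (show G.Adj u v from hadj))⟩

lemma mem_bComp_or_cSet_of_adj {u v : V} (hu : u ∈ bComp G b K) (hadj : G.Adj u v) :
    v ∈ bComp G b K ∪ cSet G b K := by
  by_cases hv : v ∈ bComp G b K
  · exact Or.inl hv
  · exact Or.inr ⟨hv, u, hu, hadj⟩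

lemma self_notMem_aSet (hb : b ∉ K) : b ∉ aSet G b K :=
  fun h => h (Or.inl (self_mem_bComp hb))

lemma outerBoundary_aSet_subset_cSet : outerBoundary G (aSet G b K) ⊆ cSet G b K := by
  rintro s ⟨hs, x, hx, hxs⟩
  rcases not_not.1 hs with hsB | hsC
  · exact absurd (mem_bComp_or_cSet_of_adj hsB hxs.symm) hx
  · exact hsC

lemma mem_cSet_of_adj_aSet {x s : V} (hx : x ∈ aSet G b K) (hxs : G.Adj x s)
    (hs : s ∉ aSet G b K) : s ∈ cSet G b K :=
  outerBoundary_aSet_subset_cSet ⟨hs, x, hx, hxs⟩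

/-- A walk from `b ∉ U` into `U` has to cross `outerBoundary G U`. -/
lemma subset_aSet_outerBoundary (hb : b ∉ U) : U ⊆ aSet G b (outerBoundary G U) := by
  intro x hx
  rintro (⟨hxS, hbS, ⟨p⟩⟩ | hxC)
  · obtain ⟨d, -, hd₁, hd₂⟩ := p.exists_boundary_dart {a | a.1 ∉ U} hb (not_not.2 hx)
    exact d.fst.2 ⟨hd₁, d.snd, not_not.1 hd₂, d.adj.symm⟩
  · exact (cSet_subset hxC).1 hx

lemma exists_aSet_upper_bound {𝒞 : Set (Set V)}
    (h𝒞 : ∀ A ∈ 𝒞, ∃ K', G.IsClique K' ∧ b ∉ K' ∧ aSet G b K' = A)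
    (hchain : IsChain (· ⊆ ·) 𝒞) :
    ∃ S, G.IsClique S ∧ b ∉ S ∧ ∀ A ∈ 𝒞, A ⊆ aSet G b S := by
  have hbU : b ∉ ⋃₀ 𝒞 := by
    rintro ⟨A, hA, hbA⟩
    obtain ⟨K', -, hbK', rfl⟩ := h𝒞 A hA
    exact self_notMem_aSet hbK' hbA
  have hmem : ∀ K', aSet G b K' ∈ 𝒞 → ∀ x ∈ aSet G b K', ∀ s ∉ ⋃₀ 𝒞, G.Adj x s → s ∈ K' :=
    fun K' hK' x hx s hs hxs =>
      cSet_subset (outerBoundary_aSet_subset_cSet ⟨fun h => hs ⟨_, hK', h⟩, x, hx, hxs⟩)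
  refine ⟨outerBoundary G (⋃₀ 𝒞), ?_, ?_, fun A hA =>
    (Set.subset_sUnion_of_mem hA).trans (subset_aSet_outerBoundary hbU)⟩
  · rintro s ⟨hs, x, ⟨A, hA, hxA⟩, hxs⟩ t ⟨ht, y, ⟨A', hA', hyA'⟩, hyt⟩ hst
    obtain ⟨B, hB, hxB, hyB⟩ : ∃ B ∈ 𝒞, x ∈ B ∧ y ∈ B := by
      rcases hchain.total hA hA' with h | h
      exacts [⟨A', hA', h hxA, hyA'⟩, ⟨A, hA, hxA, h hyA'⟩]
    obtain ⟨K', hK', -, rfl⟩ := h𝒞 B hB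
    exact hK' (hmem K' hB x hxB s hs hxs) (hmem K' hB y hyB t ht hyt) hst
  · rintro ⟨hb, x, ⟨A, hA, hxA⟩, hxb⟩
    obtain ⟨K', -, hbK', rfl⟩ := h𝒞 A hA
    exact hbK' (hmem K' hA x hxA b hb hxb)

lemma exists_isMaxSep_aSet_subset (hK : G.IsClique K) (hb : b ∉ K) :
    ∃ K₁, IsMaxSep G b K₁ ∧ aSet G b K ⊆ aSet G b K₁ := by
  obtain ⟨_, hKm, hmax⟩ := zorn_subset_nonempty
    {A | ∃ K', G.IsClique K' ∧ b ∉ K' ∧ aSet G b K' = A}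
    (fun 𝒞 h𝒞 hchain _ => by
      obtain ⟨S, hS, hbS, hub⟩ := exists_aSet_upper_bound h𝒞 hchain
      exact ⟨_, ⟨S, hS, hbS, rfl⟩, hub⟩)
    (aSet G b K) ⟨K, hK, hb, rfl⟩
  obtain ⟨K₁, hK₁, hbK₁, rfl⟩ := hmax.prop
  exact ⟨K₁, ⟨hK₁, hbK₁, fun K' hK' hbK' => hmax.not_ssuperset ⟨K', hK', hbK', rfl⟩⟩, hKm⟩

/-- The separator of a maximal separation lies in the central bag: otherwise the clique
`outerBoundary (A(K₁) ∪ A(K'))` would give a separation beyond `K₁`. -/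
lemma cSet_subset_betaSet (hK₁ : IsMaxSep G b K₁) : cSet G b K₁ ⊆ betaSet G b := by
  intro c hc K' hK'
  by_contra hcA
  change c ∈ aSet G b K' at hcA
  set U := aSet G b K₁ ∪ aSet G b K'
  have hbU : b ∉ U := by
    rintro (h | h)
    · exact self_notMem_aSet hK₁.2.1 h
    · exact self_notMem_aSet hK'.2.1 h
  have hSC : outerBoundary G U ⊆ cSet G b K' := by
    rintro s ⟨hsU, x, hx | hx, hxs⟩
    · have hs₁ : s ∈ K₁ :=
        cSet_subset (mem_cSet_of_adj_aSet hx hxs fun h => hsU (Or.inl h))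
      have hcs : G.Adj c s := hK₁.1 (cSet_subset hc) hs₁ fun h => hsU (h ▸ Or.inr hcA)
      exact mem_cSet_of_adj_aSet hcA hcs fun h => hsU (Or.inr h)
    · exact mem_cSet_of_adj_aSet hx hxs fun h => hsU (Or.inr h)
  have hUS := subset_aSet_outerBoundary (G := G) hbU
  refine hK₁.2.2 _ (hK'.1.subset (hSC.trans cSet_subset))
    (fun h => hK'.2.1 (cSet_subset (hSC h))) ⟨fun x hx => hUS (Or.inl hx), fun h => ?_⟩
  exact h (hUS (Or.inr hcA)) (Or.inr hc)

lemma self_mem_betaSet : b ∈ betaSet G b :=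
  fun _ hK₁ => Or.inl (self_mem_bComp hK₁.2.1)

lemma mem_bComp_of_mem_betaSet (hK : G.IsClique K) (hb : b ∉ K) {t : V}
    (ht : t ∈ betaSet G b) (htK : t ∉ K) : t ∈ bComp G b K := by
  obtain ⟨K₁, hK₁, hsub⟩ := exists_isMaxSep_aSet_subset hK hb
  have htA : t ∉ aSet G b K := fun h => hsub h (ht K₁ hK₁)
  rcases not_not.1 htA with htB | htC
  · exact htB
  · exact absurd (cSet_subset htC) htK

/-- While a walk runs through `A(K₁)` for a maximal `K₁`, any vertex of the clique `C(K₁)`,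
through which it has to leave `A(K₁)`, stands in for its current vertex. -/
lemma reachable_induce_betaSet_diff_of_walk {x t : (Kᶜ : Set V)}
    (p : (G.induce Kᶜ).Walk x t) (ht : t.1 ∈ betaSet G b) (y : (betaSet G b \ K : Set V))
    (hy : y.1 = x.1 ∨ ∃ K₁, IsMaxSep G b K₁ ∧ x.1 ∈ aSet G b K₁ ∧ y.1 ∈ cSet G b K₁) :
    (G.induce (betaSet G b \ K)).Reachable y ⟨t, ht, t.2⟩ := by
  induction p generalizing y with
  | @nil x =>
    rcases hy with hyx | ⟨K₁, hK₁, hxA, -⟩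
    · rw [show y = ⟨_, ht, x.2⟩ from Subtype.ext hyx]
    · exact absurd (ht K₁ hK₁) hxA
  | @cons x x' _ hxx' p ih =>
    change G.Adj x.1 x'.1 at hxx'
    rcases hy with hyx | ⟨K₁, hK₁, hxA, hyC⟩
    · by_cases hx'β : x'.1 ∈ betaSet G b
      · have hyx' : (G.induce (betaSet G b \ K)).Adj y ⟨x', hx'β, x'.2⟩ :=
          show G.Adj y.1 x'.1 from hyx ▸ hxx'
        exact hyx'.reachable.trans (ih ht _ (Or.inl rfl))
      · obtain ⟨K₁, hK₁, hx'A⟩ : ∃ K₁, IsMaxSep G b K₁ ∧ x'.1 ∈ aSet G b K₁ := by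
          simpa [betaSet, aSet] using hx'β
        have hxC : x.1 ∈ cSet G b K₁ :=
          mem_cSet_of_adj_aSet hx'A hxx'.symm fun h => h (hyx ▸ y.2.1 K₁ hK₁)
        exact ih ht y (Or.inr ⟨K₁, hK₁, hx'A, hyx ▸ hxC⟩)
    · by_cases hx'A : x'.1 ∈ aSet G b K₁
      · exact ih ht y (Or.inr ⟨K₁, hK₁, hx'A, hyC⟩)
      · have hx'C := mem_cSet_of_adj_aSet hxA hxx' hx'A
        let z : (betaSet G b \ K : Set V) := ⟨x', cSet_subset_betaSet hK₁ hx'C, x'.2⟩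
        exact (reachable_induce_of_isClique (z := z) hK₁.1 (cSet_subset hyC)
          (cSet_subset hx'C)).trans (ih ht z (Or.inl rfl))

lemma preconnected_induce_betaSet_diff (hK : G.IsClique K) (hb : b ∉ K) :
    (G.induce (betaSet G b \ K)).Preconnected := by
  suffices h : ∀ t, (G.induce (betaSet G b \ K)).Reachable ⟨b, self_mem_betaSet, hb⟩ t from
    fun u v => (h u).symm.trans (h v)
  rintro ⟨t, htβ, htK⟩
  obtain ⟨_, _, ⟨p⟩⟩ := mem_bComp_of_mem_betaSet hK hb htβ htK
  exact reachable_induce_betaSet_diff_of_walk p htβ _ (Or.inl rfl)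

end CentralBag

theorem stmt_12_general {V : Type*} (G : SimpleGraph V) (b : V)
    (K : Set V) (hK : G.IsClique K)
    (u v : V) (hu : u ∈ betaSet G b \ K) (hv : v ∈ betaSet G b \ K)
    (hcut : ¬ (G.induce (betaSet G b \ K)).Reachable ⟨u, hu⟩ ⟨v, hv⟩) :
    b ∈ K := by
  by_contra hb
  exact hcut (preconnected_induce_betaSet_diff hK hb _ _)

/-- If `K` is a clique cutset of the induced subgraph on `β(D,b)`, then
`b ∈ K`. -/
theorem stmt_12 {V : Type*} (G : SimpleGraph V) (hG : G.Connected) (b : V)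
    (K : Set V) (hK : G.IsClique K) (hKβ : K ⊆ betaSet G b)
    (u v : V) (hu : u ∈ betaSet G b \ K) (hv : v ∈ betaSet G b \ K) (huv : u ≠ v)
    (hcut : ¬ (G.induce (betaSet G b \ K)).Reachable ⟨u, hu⟩ ⟨v, hv⟩) :
    b ∈ K :=
  stmt_12_general G b K hK u v hu hv hcut
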